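/- arXiv:1408.5686 — 8 statements merged into one kernel-verified Lean document; each statement's English description precedes it below -/
import Mathlib

section
/- Let V be a complex inner product space and let u_1, ..., u_k be pairwise distinct vectors in V. Then the k×k complex matrix M with entries M_{ij} = exp(⟨u_i, u_j⟩) (inner product conjugate-linear in the first argument) is Hermitian positive definite; in particular it is invertible. Equivalently, any finite set of distinct exponential vectors is linearly independent. -/
open scoped InnerProductSpace ComplexOrder Nat
open Matrix Polynomial

/-!
The matrix `exp ⟪u i, u j⟫` is the entrywise exponential of the Gram matrix `G` of the `u i`, so
its quadratic form is `∑ₙ (x⋆ G^{∘n} x) / n!`, and by the Schur product theorem every Hadamard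
power `G^{∘n}` is positive semidefinite. Hence the form vanishes at `x` only if `G^{∘n} x = 0`
for every `n`. Pick `i` with `x i ≠ 0` and `‖u i‖` maximal: the `i`-th rows of these equations say
that all moments of the weights `x j` at the points `⟪u i, u j⟫` vanish, so by polynomial
interpolation the weights at the point `‖u i‖²` sum to zero. By the equality case of
Cauchy–Schwarz that point is attained, among the `j` with `x j ≠ 0`, only at `j = i`; so `x i = 0`.
-/

section Interpolation

variable {ι K : Type*} [Fintype ι] [Field K] {a y : ι → K}

theorem sum_eval_mul_eq_zero_of_forall_sum_pow_mul_eq_zero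
    (h : ∀ n, ∑ j, a j ^ n * y j = 0) (P : K[X]) : ∑ j, P.eval (a j) * y j = 0 := by
  simp_rw [eval_eq_sum_range, Finset.sum_mul, mul_assoc]
  rw [Finset.sum_comm]
  simp [← Finset.mul_sum, h]

theorem sum_filter_eq_zero_of_forall_sum_pow_mul_eq_zero [DecidableEq K]
    (h : ∀ n, ∑ j, a j ^ n * y j = 0) (c : K) : ∑ j with a j = c, y j = 0 := by
  set P : K[X] := ∏ t ∈ (Finset.univ.image a).erase c, (X - C t)
  have hPc : P.eval c ≠ 0 := by
    simp only [P, eval_prod, eval_sub, eval_X, eval_C, Finset.prod_ne_zero_iff, sub_ne_zero]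
    exact fun t ht => (Finset.ne_of_mem_erase ht).symm
  have hP : ∀ j, P.eval (a j) = if a j = c then P.eval c else 0 := by
    intro j
    split_ifs with hj
    · rw [hj]
    · exact (eval_prod _ _ _).trans <| Finset.prod_eq_zero
        (Finset.mem_erase.mpr ⟨hj, Finset.mem_image_of_mem a (Finset.mem_univ j)⟩) (by simp)
  have := sum_eval_mul_eq_zero_of_forall_sum_pow_mul_eq_zero h P
  simp_rw [hP, ite_mul, zero_mul, ← Finset.sum_filter, ← Finset.mul_sum] at this
  exact (mul_eq_zero.mp this).resolve_left hPc

end Interpolation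

theorem eq_of_norm_le_of_inner_eq_inner_self {𝕜 E : Type*} [RCLike 𝕜] [NormedAddCommGroup E]
    [InnerProductSpace 𝕜 E] {v w : E} (hwv : ‖w‖ ≤ ‖v‖) (h : ⟪v, w⟫_𝕜 = ⟪v, v⟫_𝕜) : w = v := by
  -- `‖v - w‖² = ‖w‖² - ‖v‖² ≤ 0`
  have hre : RCLike.re ⟪v, w⟫_𝕜 = ‖v‖ ^ 2 := by rw [h, inner_self_eq_norm_sq]
  have : ‖v - w‖ ^ 2 ≤ 0 := by
    rw [@norm_sub_sq 𝕜, hre]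
    nlinarith [norm_nonneg w]
  exact (sub_eq_zero.mp (norm_eq_zero.mp (by nlinarith [norm_nonneg (v - w)]))).symm

theorem eq_zero_of_forall_map_pow_gram_mulVec_eq_zero {𝕜 E ι : Type*} [RCLike 𝕜]
    [NormedAddCommGroup E] [InnerProductSpace 𝕜 E] [Fintype ι] {u : ι → E}
    (hu : Function.Injective u) {x : ι → 𝕜} (h : ∀ n, (gram 𝕜 u).map (· ^ n) *ᵥ x = 0) :
    x = 0 := by
  classical
  by_contra hx
  obtain ⟨i, hxi, hmax⟩ := Finset.exists_max_image {j | x j ≠ 0} (‖u ·‖)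
    (by simpa [Finset.Nonempty, funext_iff] using hx)
  have hrow : ∀ n, ∑ j, ⟪u i, u j⟫_𝕜 ^ n * x j = 0 := fun n => by
    simpa [mulVec, dotProduct, gram_apply] using congrFun (h n) i
  have hi := sum_filter_eq_zero_of_forall_sum_pow_mul_eq_zero hrow ⟪u i, u i⟫_𝕜
  rw [Finset.sum_eq_single_of_mem i (by simp)] at hi
  · exact (Finset.mem_filter.mp hxi).2 hi
  · intro j hj hji
    by_contra hxj
    have := eq_of_norm_le_of_inner_eq_inner_self (hmax j (by simpa using hxj))
      (Finset.mem_filter.mp hj).2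
    exact hji (hu this)

namespace Matrix

variable {ι : Type*}

theorem PosSemidef.map_pow {𝕜 : Type*} [RCLike 𝕜] [Finite ι] {A : Matrix ι ι 𝕜}
    (hA : A.PosSemidef) (n : ℕ) : (A.map (· ^ n)).PosSemidef := by
  induction n with
  | zero =>
    convert posSemidef_gram 𝕜 fun _ : ι => (1 : 𝕜)
    ext; simp [gram_apply]
  | succ n ih =>
    convert ih.hadamard hA using 1
    ext; simp [pow_succ]

theorem hasSum_map_exp (A : Matrix ι ι ℂ) :
    HasSum (fun n => (n ! : ℂ)⁻¹ • A.map (· ^ n)) (A.map Complex.exp) :=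
  Pi.hasSum.2 fun i => Pi.hasSum.2 fun j => by
    simpa [Complex.exp_eq_exp_ℂ, div_eq_inv_mul] using
      NormedSpace.expSeries_div_hasSum_exp (A i j)

theorem PosSemidef.posDef_map_exp [Fintype ι] {A : Matrix ι ι ℂ} (hA : A.PosSemidef)
    (h : ∀ x, (∀ n, A.map (· ^ n) *ᵥ x = 0) → x = 0) : (A.map Complex.exp).PosDef := by
  refine .of_dotProduct_mulVec_pos (hA.isHermitian.map _ fun z => Complex.exp_conj z)
    fun x hx => ?_
  let q : Matrix ι ι ℂ →+ ℂ :=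
    { toFun B := star x ⬝ᵥ B *ᵥ x
      map_zero' := by simp
      map_add' := by simp [add_mulVec, dotProduct_add] }
  have hsum : HasSum (fun n => (n ! : ℂ)⁻¹ * (star x ⬝ᵥ A.map (· ^ n) *ᵥ x))
      (star x ⬝ᵥ A.map Complex.exp *ᵥ x) := by
    have hq : Continuous q := show Continuous fun B : Matrix ι ι ℂ => star x ⬝ᵥ B *ᵥ x by fun_prop
    simpa [q, Function.comp_def, smul_mulVec, dotProduct_smul] using (hasSum_map_exp A).map q hq
  have hcoef : ∀ n, (0 : ℂ) < (n ! : ℂ)⁻¹ := fun n => by positivity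
  have hnonneg n : 0 ≤ (n ! : ℂ)⁻¹ * (star x ⬝ᵥ A.map (· ^ n) *ᵥ x) :=
    mul_nonneg (hcoef n).le ((hA.map_pow n).dotProduct_mulVec_nonneg x)
  obtain ⟨n, hn⟩ : ∃ n, A.map (· ^ n) *ᵥ x ≠ 0 := by
    by_contra! hker
    exact hx (h x hker)
  have hpos : 0 < (n ! : ℂ)⁻¹ * (star x ⬝ᵥ A.map (· ^ n) *ᵥ x) :=
    mul_pos (hcoef n) <| ((hA.map_pow n).dotProduct_mulVec_nonneg x).lt_of_ne'
      (mt ((hA.map_pow n).dotProduct_mulVec_zero_iff x).mp hn)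
  exact hasSum_lt hnonneg hpos hasSum_zero hsum

end Matrix

/-- For pairwise distinct vectors `u 0, …, u (k-1)` in a complex inner
product space, the Gram-type matrix with entries `exp ⟪u i, u j⟫` is Hermitian positive
definite; in particular it is invertible (equivalently, any finite set of distinct
exponential vectors is linearly independent). -/
theorem exp_inner_matrix_posDef {V : Type*} [NormedAddCommGroup V] [InnerProductSpace ℂ V]
    {k : ℕ} (u : Fin k → V) (hu : Function.Injective u) :
    (Matrix.of fun i j : Fin k => Complex.exp ⟪u i, u j⟫_ℂ).PosDef ∧
      IsUnit (Matrix.of fun i j : Fin k => Complex.exp ⟪u i, u j⟫_ℂ).det := by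
  have hPD : ((gram ℂ u).map Complex.exp).PosDef :=
    (posSemidef_gram ℂ u).posDef_map_exp fun _ =>
      eq_zero_of_forall_map_pow_gram_mulVec_eq_zero hu
  exact ⟨hPD, hPD.det_pos.ne'.isUnit⟩
end

section
/- Let G be a second countable metric group acting continuously on a second countable metric space A, and let K : A × A → ℂ be a continuous positive definite kernel that is G-invariant, i.e. K(gα, gβ) = K(α, β) for all α, β ∈ A and g ∈ G. Then there exist a complex separable Hilbert space H, a continuous map λ : A → H whose range has dense linear span in H, and a strongly continuous unitary representation g ↦ π(g) of G on H such that K(α, β) = ⟨λ(α), λ(β)⟩ for all α, β ∈ A and π(g)λ(α) = λ(gα) for all g ∈ G, α ∈ A. -/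
open scoped InnerProductSpace ComplexOrder

/-- A GNS-type Gelfand triple for a `G`-invariant positive definite kernel `K` on `A`:
a complex (separable) Hilbert space `H`, a continuous map `lam : A → H` whose range has
dense linear span, and a strongly continuous unitary representation `rep` of `G` on `H`
reproducing `K` and intertwining the `G`-action. -/
structure GNSTriple (G A : Type) [Group G] [TopologicalSpace G] [TopologicalSpace A]
    [MulAction G A] (K : A → A → ℂ) where
  H : Type
  [instNACG : NormedAddCommGroup H]
  [instIPS : InnerProductSpace ℂ H]
  [instComplete : CompleteSpace H]
  [instSep : TopologicalSpace.SeparableSpace H]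
  lam : A → H
  rep : G →* (H ≃ₗᵢ[ℂ] H)
  lam_continuous : Continuous lam
  dense_span : Dense (Submodule.span ℂ (Set.range lam) : Set H)
  rep_continuous : ∀ x : H, Continuous fun g : G => rep g x
  inner_lam : ∀ α β : A, ⟪lam α, lam β⟫_ℂ = K α β
  equivariant : ∀ (g : G) (α : A), rep g (lam α) = lam (g • α)

attribute [instance] GNSTriple.instNACG GNSTriple.instIPS GNSTriple.instComplete
  GNSTriple.instSep

/-!
The kernel makes the finitely supported functions `A →₀ ℂ` a pre-Hilbert space with
`⟪δ_a, δ_b⟫ = K a b`; `H` is its completion and `λ a` the class of `δ_a`. Translating supports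
by `g` preserves this form because `K` is `G`-invariant, so it extends to a unitary of `H`.
Since `‖λ a - λ b‖²` is a combination of values of `K`, continuity of `K` gives continuity of
`λ`, hence separability of `H` and continuity of `g ↦ π g (λ a)`; the `π g` being
equicontinuous, strong continuity passes from the dense span of `λ(A)` to all of `H`.
-/

open UniformSpace

noncomputable section

def IsPosDefKernel {A : Type*} (K : A → A → ℂ) : Prop :=
  ∀ (k : ℕ) (α : Fin k → A) (c : Fin k → ℂ),
    0 ≤ ∑ i, ∑ j, (starRingEnd ℂ) (c i) * c j * K (α i) (α j)

namespace IsPosDefKernel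

variable {A : Type*} {K : A → A → ℂ}

-- Test positivity on `a, b` against the coefficient vectors `(1, 1)` and `(1, i)`.
theorem conj_apply (hK : IsPosDefKernel K) (a b : A) : starRingEnd ℂ (K a b) = K b a := by
  have h₁ := (Complex.le_def.1 (hK 1 ![a] ![1])).2
  have h₂ := (Complex.le_def.1 (hK 1 ![b] ![1])).2
  have h₃ := (Complex.le_def.1 (hK 2 ![a, b] ![1, 1])).2
  have h₄ := (Complex.le_def.1 (hK 2 ![a, b] ![1, Complex.I])).2
  simp [Fin.sum_univ_two] at h₁ h₂ h₃ h₄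
  apply Complex.ext <;> simp <;> linarith

theorem posSemidef (hK : IsPosDefKernel K) : Matrix.PosSemidef (n := A) K := by
  refine ⟨Matrix.IsHermitian.ext fun a b => hK.conj_apply b a, fun f => ?_⟩
  let e := f.support.equivFin
  convert hK _ (fun i => e.symm i) (fun i => f (e.symm i)) using 1
  simp only [Finsupp.sum, ← Finset.sum_coe_sort f.support]
  refine Fintype.sum_equiv e _ _ fun a => Fintype.sum_equiv e _ _ fun b => ?_
  simp only [Equiv.symm_apply_apply, RCLike.star_def]
  ring

end IsPosDefKernel

section InnerProductSpace

variable {𝕜 X E : Type*} [RCLike 𝕜] [TopologicalSpace X] [SeminormedAddCommGroup E]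
  [InnerProductSpace 𝕜 E]

theorem continuous_of_continuous_inner {f : X → E}
    (hf : Continuous fun p : X × X => ⟪f p.1, f p.2⟫_𝕜) : Continuous f := by
  refine continuous_iff_continuousAt.2 fun x₀ => tendsto_iff_norm_sub_tendsto_zero.2 ?_
  have hdiag := hf.comp (continuous_id.prodMk continuous_id)
  have hleft := hf.comp (continuous_id.prodMk (continuous_const (y := x₀)))
  have hright := hf.comp ((continuous_const (y := x₀)).prodMk continuous_id)
  have hnorm : Continuous fun x => ‖f x - f x₀‖ := by
    simp only [@norm_eq_sqrt_re_inner 𝕜, inner_sub_left, inner_sub_right]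
    fun_prop
  simpa using hnorm.tendsto x₀

end InnerProductSpace

theorem TopologicalSpace.SeparableSpace.of_continuous_dense_span {𝕜 X E : Type*}
    [NontriviallyNormedField 𝕜] [SeparableSpace 𝕜] [TopologicalSpace X] [SeparableSpace X]
    [AddCommGroup E] [TopologicalSpace E] [Module 𝕜 E] [ContinuousAdd E] [ContinuousSMul 𝕜 E]
    {f : X → E} (hf : Continuous f) (hdense : Dense (Submodule.span 𝕜 (Set.range f) : Set E)) :
    SeparableSpace E := by
  have := ((isSeparable_range hf).span (R := 𝕜)).closure
  rw [hdense.closure_eq] at this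
  exact isSeparable_univ_iff.1 this

theorem continuous_apply_of_dense_span {𝕜 G E F : Type*} [NormedField 𝕜] [TopologicalSpace G]
    [SeminormedAddCommGroup E] [NormedSpace 𝕜 E] [SeminormedAddCommGroup F] [NormedSpace 𝕜 F]
    (ρ : G → E →ₗᵢ[𝕜] F) {S : Set E} (hS : Dense (Submodule.span 𝕜 S : Set E))
    (hρS : ∀ s ∈ S, Continuous fun g => ρ g s) (x : E) :
    Continuous fun g => ρ g x := by
  have hclosed : IsClosed {x : E | Continuous fun g => ρ g x} := by
    have hequi : Equicontinuous fun g x => ρ g x :=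
      (LipschitzWith.uniformEquicontinuous _ 1 fun g => (ρ g).lipschitz).equicontinuous
    simp only [continuous_iff_continuousAt, ContinuousAt, Set.ofPred_forall]
    exact isClosed_iInter fun g₀ => hequi.isClosed_setOfPred_tendsto (ρ g₀).continuous
  have hspan : (Submodule.span 𝕜 S : Set E) ⊆ {x : E | Continuous fun g => ρ g x} := by
    intro y hy
    induction hy using Submodule.span_induction with
    | mem y hy => exact hρS y hy
    | zero => simpa using continuous_const
    | add y z _ _ hy hz => simpa using hy.fun_add hz
    | smul c y _ hy => simpa using hy.fun_const_smul c
  exact hclosed.closure_subset_iff.2 hspan (hS x)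

namespace LinearIsometryEquiv

variable {𝕜 E F : Type*} [NormedField 𝕜] [SeminormedAddCommGroup E] [NormedSpace 𝕜 E]
  [SeminormedAddCommGroup F] [NormedSpace 𝕜 F]

def completion (e : E ≃ₗᵢ[𝕜] F) : Completion E ≃ₗᵢ[𝕜] Completion F where
  toLinearEquiv :=
    let f := (e : E →L[𝕜] F).completion
    let g := (e.symm : F →L[𝕜] E).completion
    .ofLinearMap f g
      (LinearMap.ext <| Completion.ext' (f.continuous.comp g.continuous) continuous_id
        fun x => by simp [f, g])
      (LinearMap.ext <| Completion.ext' (g.continuous.comp f.continuous) continuous_id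
        fun x => by simp [f, g])
  norm_map' := e.isometry.completion_map.norm_map_of_map_zero <| by
    rw [← Completion.coe_zero, Completion.map_coe e.isometry.uniformContinuous, map_zero,
      Completion.coe_zero]

@[simp]
theorem completion_coe (e : E ≃ₗᵢ[𝕜] F) (x : E) : e.completion x = e x :=
  (e : E →L[𝕜] F).completion_apply_coe x

@[simps]
def completionHom : (E ≃ₗᵢ[𝕜] E) →* (Completion E ≃ₗᵢ[𝕜] Completion E) where
  toFun := completion
  map_one' := ext <| Completion.ext' (by fun_prop) continuous_id fun x => by simp
  map_mul' e e' := ext <| Completion.ext' (by fun_prop) (by fun_prop) fun x => by simp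

end LinearIsometryEquiv

variable {A : Type*}

-- `K` only tags the type, selecting the inner product defined below.
set_option linter.unusedVariables false in
abbrev KernelSpace (K : A → A → ℂ) : Type _ := A →₀ ℂ

namespace KernelSpace

variable (K : A → A → ℂ) [hK : Fact (Matrix.PosSemidef (n := A) K)]

instance : PreInnerProductSpace.Core ℂ (KernelSpace K) where
  inner f g := f.sum fun a x => g.sum fun b y => star x * K a b * y
  conj_inner_symm f g := by
    rw [Finsupp.sum_comm]
    simp only [map_finsuppSum]
    refine Finsupp.sum_congr fun a _ => Finsupp.sum_congr fun b _ => ?_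
    rw [← hK.out.1.apply a b]
    simp [mul_comm, mul_left_comm]
  add_left _ _ _ := by
    rw [Finsupp.sum_add_index'] <;> simp [← Finsupp.sum_add, add_mul]
  smul_left _ _ _ := by
    rw [Finsupp.sum_smul_index] <;> simp [Finsupp.mul_sum, ← mul_assoc]
  re_inner_nonneg f := (Complex.le_def.1 (hK.out.2 f)).1

instance : SeminormedAddCommGroup (KernelSpace K) :=
  InnerProductSpace.Core.toSeminormedAddCommGroup (𝕜 := ℂ)

instance : InnerProductSpace ℂ (KernelSpace K) := .ofCore _

theorem inner_def (f g : KernelSpace K) :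
    ⟪f, g⟫_ℂ = f.sum fun a x => g.sum fun b y => star x * K a b * y := rfl

variable {K}

theorem inner_single_single (a b : A) (x y : ℂ) :
    ⟪(Finsupp.single a x : KernelSpace K), Finsupp.single b y⟫_ℂ = star x * K a b * y := by
  simp [inner_def]

theorem inner_mapDomain {σ : A → A} (hσ : ∀ a b, K (σ a) (σ b) = K a b) (f g : KernelSpace K) :
    ⟪(Finsupp.mapDomain σ f : KernelSpace K), Finsupp.mapDomain σ g⟫_ℂ = ⟪f, g⟫_ℂ := by
  simp [inner_def, Finsupp.sum_mapDomain_index, add_mul, mul_add, hσ]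

variable {G : Type*} [Group G] [MulAction G A]

def rep (hinv : ∀ (g : G) (a b : A), K (g • a) (g • b) = K a b) :
    G →* (KernelSpace K ≃ₗᵢ[ℂ] KernelSpace K) where
  toFun g := LinearEquiv.isometryOfInner (Finsupp.domLCongr (MulAction.toPerm g))
    fun f f' => by simpa [Finsupp.equivMapDomain_eq_mapDomain] using
      inner_mapDomain (σ := MulAction.toPerm g) (hinv g) f f'
  map_one' := by ext f a; simp
  map_mul' g h := by ext f a; simp [mul_smul]

theorem rep_single (hinv : ∀ (g : G) (a b : A), K (g • a) (g • b) = K a b) (g : G) (a : A)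
    (x : ℂ) : rep hinv g (Finsupp.single a x) = Finsupp.single (g • a) x :=
  Finsupp.domLCongr_single _ a x

end KernelSpace

section KernelFeature

variable (K : A → A → ℂ) [Fact (Matrix.PosSemidef (n := A) K)]

def kernelFeature (a : A) : Completion (KernelSpace K) :=
  (Finsupp.single a 1 : KernelSpace K)

theorem inner_kernelFeature (a b : A) : ⟪kernelFeature K a, kernelFeature K b⟫_ℂ = K a b := by
  simp [kernelFeature, KernelSpace.inner_single_single]

theorem dense_span_range_kernelFeature :
    Dense (Submodule.span ℂ (Set.range (kernelFeature K)) :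
      Set (Completion (KernelSpace K))) := by
  refine Completion.denseRange_coe.mono ?_
  rintro _ ⟨f, rfl⟩
  have h := Submodule.apply_mem_span_image_of_mem_span
    (Completion.toComplL (𝕜 := ℂ) (E := KernelSpace K)).toLinearMap
    (Finsupp.basisSingleOne.mem_span f)
  rwa [← Set.range_comp] at h

variable {K}

theorem continuous_kernelFeature [TopologicalSpace A]
    (hK : Continuous fun p : A × A => K p.1 p.2) : Continuous (kernelFeature K) :=
  continuous_of_continuous_inner (𝕜 := ℂ) (by simpa only [inner_kernelFeature] using hK)

variable {G : Type*} [Group G] [MulAction G A]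
  (hinv : ∀ (g : G) (a b : A), K (g • a) (g • b) = K a b)

def kernelRep : G →* (Completion (KernelSpace K) ≃ₗᵢ[ℂ] Completion (KernelSpace K)) :=
  LinearIsometryEquiv.completionHom.comp (KernelSpace.rep hinv)

theorem kernelRep_kernelFeature (g : G) (a : A) :
    kernelRep hinv g (kernelFeature K a) = kernelFeature K (g • a) := by
  simp [kernelRep, kernelFeature, KernelSpace.rep_single]

theorem continuous_kernelRep_apply [TopologicalSpace G] [TopologicalSpace A] [ContinuousSMul G A]
    (hK : Continuous fun p : A × A => K p.1 p.2) (x : Completion (KernelSpace K)) :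
    Continuous fun g => kernelRep hinv g x := by
  refine continuous_apply_of_dense_span (fun g => (kernelRep hinv g).toLinearIsometry)
    (dense_span_range_kernelFeature K) ?_ x
  rintro _ ⟨a, rfl⟩
  simp only [LinearIsometryEquiv.coe_toLinearIsometry, kernelRep_kernelFeature]
  exact (continuous_kernelFeature hK).comp (continuous_id.smul continuous_const)

end KernelFeature

end

theorem gns_existence_general (G A : Type) [Group G] [MetricSpace G]
    [MetricSpace A] [SecondCountableTopology A]
    [MulAction G A] [ContinuousSMul G A] (K : A → A → ℂ)
    (hKcont : Continuous fun p : A × A => K p.1 p.2)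
    (hKpos : ∀ (k : ℕ) (α : Fin k → A) (c : Fin k → ℂ),
      0 ≤ ∑ i, ∑ j, (starRingEnd ℂ) (c i) * c j * K (α i) (α j))
    (hKinv : ∀ (g : G) (α β : A), K (g • α) (g • β) = K α β) :
    Nonempty (GNSTriple G A K) := by
  have : Fact (Matrix.PosSemidef (n := A) K) := ⟨IsPosDefKernel.posSemidef hKpos⟩
  exact ⟨{ H := Completion (KernelSpace K)
           instSep := .of_continuous_dense_span (𝕜 := ℂ) (continuous_kernelFeature hKcont)
             (dense_span_range_kernelFeature K)
           lam := kernelFeature K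
           rep := kernelRep hKinv
           lam_continuous := continuous_kernelFeature hKcont
           dense_span := dense_span_range_kernelFeature K
           rep_continuous := continuous_kernelRep_apply hKinv hKcont
           inner_lam := inner_kernelFeature K
           equivariant := kernelRep_kernelFeature hKinv }⟩

/-- **GNS construction.** Let `G` be a second countable metric group acting
continuously on a second countable metric space `A`, and let `K` be a continuous,
positive definite, `G`-invariant kernel on `A`.  Then there is a Gelfand triple
`(H, lam, rep)` for `K`. -/
theorem gns_existence (G A : Type) [Group G] [MetricSpace G] [IsTopologicalGroup G]
    [SecondCountableTopology G] [MetricSpace A] [SecondCountableTopology A]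
    [MulAction G A] [ContinuousSMul G A] (K : A → A → ℂ)
    (hKcont : Continuous fun p : A × A => K p.1 p.2)
    (hKpos : ∀ (k : ℕ) (α : Fin k → A) (c : Fin k → ℂ),
      0 ≤ ∑ i, ∑ j, (starRingEnd ℂ) (c i) * c j * K (α i) (α j))
    (hKinv : ∀ (g : G) (α β : A), K (g • α) (g • β) = K α β) :
    Nonempty (GNSTriple G A K) :=
  gns_existence_general G A K hKcont hKpos hKinv
end

section
/- Let H_S be a complex Hilbert space, d ≥ 1, and let {L_β^α : α, β ∈ {0, 1, ..., d}} be bounded operators on H_S satisfying, for every α, β ∈ {0, 1, ..., d}: L_β^α + (L_α^β)† + Σ_{i=1}^d (L_α^i)† L_β^i = 0 and L_β^α + (L_α^β)† + Σ_{i=1}^d L_i^α (L_i^β)† = 0. Then there exist bounded operators L_1, ..., L_d on H_S, a bounded selfadjoint operator H on H_S, and bounded operators S_j^i (i, j ∈ {1, ..., d}) on H_S such that the block operator matrix ((S_j^i)) acting on H_S ⊗ ℂ^d is unitary, and L_j^i = S_j^i − δ_j^i I for i, j ∈ {1, ..., d}, L_0^i = L_i for 1 ≤ i ≤ d, L_j^0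 = −Σ_{k=1}^d L_k† S_j^k for 1 ≤ j ≤ d, and L_0^0 = −(iH + ½ Σ_{k=1}^d L_k† L_k). -/
/-!
Put `S := M + 1`, where `M` is the `d × d` block `(L_j^i)_{i,j ≥ 1}`. Read in the star ring of
`d × d` matrices over `B(H_S)`, the two conditions for `i, j ≥ 1` say `M + M† + M†M = 0` and
`M + M† + MM† = 0`, i.e. `S†S = 1 = SS†`; and a unitary matrix of operators acts unitarily on
`H_S ⊗ ℂᵈ`. With `L_i := L_0^i`, the condition for `(0, j)` is `L_j^0 = -Σ_k L_k† S_j^k`, and the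
one for `(0, 0)` says that the real part of `L_0^0` is `-½ Σ_k L_k† L_k`, so `H` is minus its
imaginary part.
-/

open scoped InnerProductSpace Matrix ComplexStarModule

section StarRing

variable {R : Type*} [Ring R] [StarRing R]

theorem star_add_one_mul_add_one_eq_one {x : R} (h : x + star x + star x * x = 0) :
    star (x + 1) * (x + 1) = 1 :=
  calc star (x + 1) * (x + 1) = (x + star x + star x * x) + 1 := by
        rw [star_add, star_one]; noncomm_ring
    _ = 1 := by rw [h, zero_add]

theorem add_one_mul_star_add_one_eq_one {x : R} (h : x + star x + x * star x = 0) :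
    (x + 1) * star (x + 1) = 1 :=
  calc (x + 1) * star (x + 1) = (x + star x + x * star x) + 1 := by
        rw [star_add, star_one]; noncomm_ring
    _ = 1 := by rw [h, zero_add]

theorem add_one_mem_unitary {x : R} (h₁ : x + star x + star x * x = 0)
    (h₂ : x + star x + x * star x = 0) : x + 1 ∈ unitary R :=
  ⟨star_add_one_mul_add_one_eq_one h₁, add_one_mul_star_add_one_eq_one h₂⟩

end StarRing

theorem eq_neg_I_smul_neg_imaginaryPart_add_half_smul {A : Type*} [AddCommGroup A]
    [Module ℂ A] [StarAddMonoid A] [StarModule ℂ A] {a k : A} (h : a + star a + k = 0) :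
    a = -(Complex.I • (-ℑ a : A) + (1 / 2 : ℂ) • k) := by
  have hre : (ℜ a : A) = -(1 / 2 : ℂ) • k := by
    rw [realPart_apply_coe, eq_neg_of_add_eq_zero_left h]
    module
  conv_lhs => rw [← realPart_add_I_smul_imaginaryPart a, hre]
  simp only [smul_neg, neg_smul, neg_add_rev, neg_neg]

noncomputable section

namespace Matrix

variable {𝕜 E ι : Type*} [RCLike 𝕜] [NormedAddCommGroup E] [InnerProductSpace 𝕜 E] [Fintype ι]

def blockOperator (S : Matrix ι ι (E →L[𝕜] E)) :
    PiLp 2 (fun _ : ι => E) →ₗ[𝕜] PiLp 2 (fun _ : ι => E) where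
  toFun x := WithLp.toLp 2 fun i => ∑ j, S i j (x j)
  map_add' x y := by ext i; simp [Finset.sum_add_distrib]
  map_smul' c x := by ext i; simp [Finset.smul_sum]

theorem blockOperator_apply (S : Matrix ι ι (E →L[𝕜] E)) (x : PiLp 2 (fun _ : ι => E)) (i : ι) :
    blockOperator S x i = ∑ j, S i j (x j) := rfl

theorem blockOperator_mul (S T : Matrix ι ι (E →L[𝕜] E)) :
    blockOperator (S * T) = blockOperator S ∘ₗ blockOperator T := by
  ext x i
  simp only [blockOperator_apply, LinearMap.comp_apply, mul_apply, map_sum, _root_.sum_apply,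
    _root_.mul_apply_eq_comp]
  exact Finset.sum_comm

theorem blockOperator_one [DecidableEq ι] :
    blockOperator (1 : Matrix ι ι (E →L[𝕜] E)) = LinearMap.id := by
  ext x i
  rw [blockOperator_apply, LinearMap.id_apply,
    Finset.sum_eq_single i (fun j _ hj => by simp [one_apply_ne' hj]) (by simp)]
  simp

theorem inner_blockOperator_left [CompleteSpace E] (S : Matrix ι ι (E →L[𝕜] E))
    (x y : PiLp 2 (fun _ : ι => E)) :
    ⟪blockOperator S x, y⟫_𝕜 = ⟪x, blockOperator Sᴴ y⟫_𝕜 := by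
  simp only [PiLp.inner_apply, blockOperator_apply, sum_inner, inner_sum, conjTranspose_apply,
    ContinuousLinearMap.star_eq_adjoint, ContinuousLinearMap.adjoint_inner_right]
  exact Finset.sum_comm

def blockLinearIsometryEquiv [CompleteSpace E] [DecidableEq ι] (S : Matrix ι ι (E →L[𝕜] E))
    (hS : S ∈ unitary (Matrix ι ι (E →L[𝕜] E))) :
    PiLp 2 (fun _ : ι => E) ≃ₗᵢ[𝕜] PiLp 2 (fun _ : ι => E) :=
  (LinearEquiv.ofLinearMap (blockOperator S) (blockOperator Sᴴ)
      (by rw [← blockOperator_mul, ← star_eq_conjTranspose, Unitary.mul_star_self_of_mem hS,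
        blockOperator_one])
      (by rw [← blockOperator_mul, ← star_eq_conjTranspose, Unitary.star_mul_self_of_mem hS,
        blockOperator_one])).isometryOfInner fun x y => by
    rw [LinearEquiv.coe_ofLinearMap, inner_blockOperator_left, ← LinearMap.comp_apply,
      ← blockOperator_mul, ← star_eq_conjTranspose, Unitary.star_mul_self_of_mem hS,
      blockOperator_one, LinearMap.id_apply]

theorem blockLinearIsometryEquiv_apply [CompleteSpace E] [DecidableEq ι]
    (S : Matrix ι ι (E →L[𝕜] E)) (hS : S ∈ unitary (Matrix ι ι (E →L[𝕜] E)))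
    (x : PiLp 2 (fun _ : ι => E)) (i : ι) :
    blockLinearIsometryEquiv S hS x i = ∑ j, S i j (x j) := rfl

end Matrix

end

theorem hudson_parthasarathy_structure_general {Hs : Type*} [NormedAddCommGroup Hs]
    [InnerProductSpace ℂ Hs] [CompleteSpace Hs] (d : ℕ)
    (L : Fin (d + 1) → Fin (d + 1) → (Hs →L[ℂ] Hs))
    (h1 : ∀ α β : Fin (d + 1),
      L α β + ContinuousLinearMap.adjoint (L β α)
        + ∑ i : Fin d, ContinuousLinearMap.adjoint (L i.succ α) ∘L L i.succ β = 0)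
    (h2 : ∀ α β : Fin (d + 1),
      L α β + ContinuousLinearMap.adjoint (L β α)
        + ∑ i : Fin d, L α i.succ ∘L ContinuousLinearMap.adjoint (L β i.succ) = 0) :
    ∃ (Lv : Fin d → (Hs →L[ℂ] Hs)) (H : Hs →L[ℂ] Hs)
      (S : Fin d → Fin d → (Hs →L[ℂ] Hs)),
      IsSelfAdjoint H ∧
      (∃ U : (PiLp 2 fun _ : Fin d => Hs) ≃ₗᵢ[ℂ] (PiLp 2 fun _ : Fin d => Hs),
        ∀ (x : PiLp 2 fun _ : Fin d => Hs) (i : Fin d), U x i = ∑ j : Fin d, S i j (x j)) ∧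
      (∀ i j : Fin d, L i.succ j.succ = S i j - if i = j then 1 else 0) ∧
      (∀ i : Fin d, L i.succ 0 = Lv i) ∧
      (∀ j : Fin d, L 0 j.succ
          = -∑ k : Fin d, ContinuousLinearMap.adjoint (Lv k) ∘L S k j) ∧
      L 0 0 = -(Complex.I • H
          + (1 / 2 : ℂ) • ∑ k : Fin d, ContinuousLinearMap.adjoint (Lv k) ∘L Lv k) := by
  set Lv : Fin d → (Hs →L[ℂ] Hs) := fun k => L k.succ 0
  set M : Matrix (Fin d) (Fin d) (Hs →L[ℂ] Hs) := Matrix.of fun i j => L i.succ j.succ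
  have hM₁ : M + Mᴴ + Mᴴ * M = 0 := Matrix.ext fun i j => h1 i.succ j.succ
  have hM₂ : M + Mᴴ + M * Mᴴ = 0 := Matrix.ext fun i j => h2 i.succ j.succ
  have hS := add_one_mem_unitary hM₁ hM₂
  -- `h1 0 j.succ` reads `L 0 j.succ + (star Lv + star Lv ᵥ* M) j = 0`.
  have hrow : star Lv ᵥ* (M + 1) = star Lv + star Lv ᵥ* M := by
    rw [Matrix.vecMul_add, Matrix.vecMul_one, add_comm]
  refine ⟨Lv, -ℑ (L 0 0), (M + 1 : Matrix _ _ _), (ℑ (L 0 0)).2.neg,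
    ⟨Matrix.blockLinearIsometryEquiv _ hS, Matrix.blockLinearIsometryEquiv_apply _ hS⟩,
    fun i j => by simp [M, Matrix.one_apply], fun _ => rfl, fun j => ?_,
    eq_neg_I_smul_neg_imaginaryPart_add_half_smul (h1 0 0)⟩
  rw [eq_neg_iff_add_eq_zero, ← h1 0 j.succ, add_assoc]
  exact congrArg (L 0 j.succ + ·) (congrFun hrow j)

/-- **Hudson–Parthasarathy structure of unitarity conditions.**
Let `L α β` (for `α β ∈ {0,1,…,d}`, with `L α β` playing the role of `L_β^α`) be bounded
operators on a complex Hilbert space `Hs` satisfying the two unitarity conditions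
`L_β^α + (L_α^β)† + Σᵢ (L_α^i)† L_β^i = 0` and `L_β^α + (L_α^β)† + Σᵢ L_i^α (L_i^β)† = 0`.
Then there are bounded operators `L₁, …, L_d`, a bounded selfadjoint `H`, and operators
`S_j^i` whose block operator matrix on `Hs ⊗ ℂᵈ` (realized as the Hilbert space
`PiLp 2 (fun _ : Fin d => Hs)`) is unitary, such that `L_j^i = S_j^i - δ_j^i`,
`L_0^i = L_i`, `L_j^0 = -Σ_k L_k† S_j^k` and `L_0^0 = -(iH + ½ Σ_k L_k† L_k)`. -/
theorem hudson_parthasarathy_structure {Hs : Type*} [NormedAddCommGroup Hs]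
    [InnerProductSpace ℂ Hs] [CompleteSpace Hs] (d : ℕ) (hd : 1 ≤ d)
    (L : Fin (d + 1) → Fin (d + 1) → (Hs →L[ℂ] Hs))
    (h1 : ∀ α β : Fin (d + 1),
      L α β + ContinuousLinearMap.adjoint (L β α)
        + ∑ i : Fin d, ContinuousLinearMap.adjoint (L i.succ α) ∘L L i.succ β = 0)
    (h2 : ∀ α β : Fin (d + 1),
      L α β + ContinuousLinearMap.adjoint (L β α)
        + ∑ i : Fin d, L α i.succ ∘L ContinuousLinearMap.adjoint (L β i.succ) = 0) :
    ∃ (Lv : Fin d → (Hs →L[ℂ] Hs)) (H : Hs →L[ℂ] Hs)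
      (S : Fin d → Fin d → (Hs →L[ℂ] Hs)),
      IsSelfAdjoint H ∧
      (∃ U : (PiLp 2 fun _ : Fin d => Hs) ≃ₗᵢ[ℂ] (PiLp 2 fun _ : Fin d => Hs),
        ∀ (x : PiLp 2 fun _ : Fin d => Hs) (i : Fin d), U x i = ∑ j : Fin d, S i j (x j)) ∧
      (∀ i j : Fin d, L i.succ j.succ = S i j - if i = j then 1 else 0) ∧
      (∀ i : Fin d, L i.succ 0 = Lv i) ∧
      (∀ j : Fin d, L 0 j.succ
          = -∑ k : Fin d, ContinuousLinearMap.adjoint (Lv k) ∘L S k j) ∧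
      L 0 0 = -(Complex.I • H
          + (1 / 2 : ℂ) • ∑ k : Fin d, ContinuousLinearMap.adjoint (Lv k) ∘L Lv k) :=
  hudson_parthasarathy_structure_general d L h1 h2
end

section
/- Let μ be a finite (nonzero or zero) Borel measure on ℝ. Then there exists a Borel probability measure ν on ℝ whose characteristic function is t ↦ exp(∫_ℝ (e^{itx} − 1) μ(dx)), and ν is infinitely divisible: for every positive integer k there exists a probability measure ν_k on ℝ whose k-fold convolution power equals ν. -/
/-!
The compound Poisson measure `∑ₙ e^{-μ(ℝ)} μ^{*n} / n!` is a probability measure whose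
characteristic function is
`∑ₙ e^{-μ(ℝ)} μ̂(t)ⁿ / n! = exp (μ̂(t) - μ(ℝ)) = exp ∫ (e^{itx} - 1) dμ`.
Since this is the exponential of a quantity linear in `μ`, the `k`-th convolution power of the
compound Poisson measure of `μ / k` has the same characteristic function, hence is the same
measure by Lévy's uniqueness theorem.
-/

open MeasureTheory

/-- Convolution of two Borel measures on `ℝ`: the pushforward of the product measure
under addition. -/
noncomputable def mconv (μ ν : Measure ℝ) : Measure ℝ :=
  (μ.prod ν).map fun p => p.1 + p.2

/-- `k`-fold convolution power of a measure on `ℝ` (the `0`-th power is `δ₀`). -/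
noncomputable def convPow (μ : Measure ℝ) : ℕ → Measure ℝ
  | 0 => Measure.dirac 0
  | n + 1 => mconv μ (convPow μ n)

open Complex Set
open scoped ENNReal NNReal Nat

lemma mconv_eq_conv (μ ν : Measure ℝ) : mconv μ ν = μ ∗ ν := rfl

instance isFiniteMeasure_convPow (μ : Measure ℝ) [IsFiniteMeasure μ] :
    ∀ n, IsFiniteMeasure (convPow μ n)
  | 0 => inferInstanceAs (IsFiniteMeasure (Measure.dirac 0))
  | n + 1 => by
    have := isFiniteMeasure_convPow μ n
    exact inferInstanceAs (IsFiniteMeasure (μ ∗ convPow μ n))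

lemma conv_apply_univ {M : Type*} [AddMonoid M] [MeasurableSpace M] [MeasurableAdd₂ M]
    (μ ν : Measure M) [SFinite ν] : (μ ∗ ν) univ = μ univ * ν univ := by
  rw [Measure.conv, Measure.map_apply measurable_add MeasurableSet.univ, preimage_univ,
    ← univ_prod_univ, Measure.prod_prod]

lemma convPow_apply_univ (μ : Measure ℝ) [IsFiniteMeasure μ] (n : ℕ) :
    convPow μ n univ = μ univ ^ n := by
  induction n with
  | zero => simp [convPow]
  | succ n ih => rw [convPow, mconv_eq_conv, conv_apply_univ, ih, pow_succ']

lemma charFun_convPow (μ : Measure ℝ) [IsFiniteMeasure μ] (n : ℕ) (t : ℝ) :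
    charFun (convPow μ n) t = charFun μ t ^ n := by
  induction n with
  | zero => simp [convPow]
  | succ n ih => rw [convPow, mconv_eq_conv, charFun_conv, ih, pow_succ']

lemma charFun_smul_measure {E : Type*} [MeasurableSpace E] [Inner ℝ E]
    (c : ℝ≥0∞) (μ : Measure E) (t : E) :
    charFun (c • μ) t = c.toReal * charFun μ t := by
  rw [charFun_apply, charFun_apply, integral_smul_measure, real_smul]

lemma charFun_nnreal_smul_measure {E : Type*} [MeasurableSpace E] [Inner ℝ E]
    (c : ℝ≥0) (μ : Measure E) (t : E) :
    charFun (c • μ) t = c * charFun μ t := by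
  rw [charFun_apply, charFun_apply, integral_smul_nnreal_measure, NNReal.smul_def, real_smul]

lemma charFun_eq_integral_exp_I_mul (μ : Measure ℝ) (t : ℝ) :
    charFun μ t = ∫ x, cexp (I * t * x) ∂μ := by
  simp_rw [charFun_apply_real, mul_comm I, mul_right_comm _ I]

lemma integrable_exp_I_mul (μ : Measure ℝ) [IsFiniteMeasure μ] (t : ℝ) :
    Integrable (fun x : ℝ => cexp (I * t * x)) μ :=
  (integrable_const (1 : ℝ)).mono (by fun_prop) <| .of_forall fun x => by
    rw [mul_assoc, ← ofReal_mul, mul_comm, norm_exp_ofReal_mul_I, norm_one]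

lemma integral_exp_I_mul_sub_one (μ : Measure ℝ) [IsFiniteMeasure μ] (t : ℝ) :
    ∫ x, (cexp (I * t * x) - 1) ∂μ = charFun μ t - μ.real univ := by
  rw [integral_sub (integrable_exp_I_mul μ t) (integrable_const 1), integral_const,
    charFun_eq_integral_exp_I_mul, Measure.real, real_smul, mul_one]

/-- The law of `X₁ + ⋯ + X_N` with `Xᵢ ∼ μ / μ(ℝ)` i.i.d. and `N ∼ Poisson(μ(ℝ))` independent;
`μ` is left unnormalized so that `μ = 0` needs no special case. -/
noncomputable def compoundPoisson (μ : Measure ℝ) : Measure ℝ :=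
  Measure.sum fun n => ENNReal.ofReal (Real.exp (-μ.real univ) / n !) • convPow μ n

lemma hasSum_exp_neg_mul_pow_div_factorial (a : ℝ) :
    HasSum (fun n : ℕ => Real.exp (-a) * (a ^ n / n !)) 1 := by
  simpa [Real.exp_eq_exp_ℝ, ← NormedSpace.exp_add] using
    (NormedSpace.expSeries_div_hasSum_exp a).mul_left (NormedSpace.exp (-a))

instance isProbabilityMeasure_compoundPoisson (μ : Measure ℝ) [IsFiniteMeasure μ] :
    IsProbabilityMeasure (compoundPoisson μ) := by
  constructor
  have hterm (n : ℕ) : (ENNReal.ofReal (Real.exp (-μ.real univ) / n !) • convPow μ n) univ =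
      ENNReal.ofReal (Real.exp (-μ.real univ) * (μ.real univ ^ n / n !)) := by
    rw [Measure.smul_apply, convPow_apply_univ, ← ofReal_measureReal, ← ENNReal.ofReal_pow
      measureReal_nonneg, smul_eq_mul, ← ENNReal.ofReal_mul (by positivity)]
    ring_nf
  rw [compoundPoisson, Measure.sum_apply _ MeasurableSet.univ]
  simp_rw [hterm]
  rw [← ENNReal.ofReal_tsum_of_nonneg (fun n => by positivity)
    (hasSum_exp_neg_mul_pow_div_factorial _).summable,
    (hasSum_exp_neg_mul_pow_div_factorial _).tsum_eq, ENNReal.ofReal_one]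

lemma charFun_compoundPoisson (μ : Measure ℝ) [IsFiniteMeasure μ] (t : ℝ) :
    charFun (compoundPoisson μ) t = cexp (charFun μ t - μ.real univ) := by
  have hsum := hasSum_integral_measure (integrable_exp_I_mul (compoundPoisson μ) t)
  simp only [← charFun_eq_integral_exp_I_mul, charFun_smul_measure, charFun_convPow] at hsum
  have hweight (n : ℕ) : (ENNReal.ofReal (Real.exp (-μ.real univ) / n !)).toReal =
      Real.exp (-μ.real univ) / n ! := ENNReal.toReal_ofReal (by positivity)
  simp only [hweight] at hsum
  have hexp := (NormedSpace.expSeries_div_hasSum_exp (charFun μ t)).mul_left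
    (cexp (-μ.real univ))
  rw [← exp_eq_exp_ℂ, ← Complex.exp_add, neg_add_eq_sub] at hexp
  refine hsum.unique (hexp.congr_fun fun n => ?_)
  push_cast
  ring

lemma convPow_compoundPoisson_inv_smul (μ : Measure ℝ) [IsFiniteMeasure μ] {k : ℕ}
    (hk : k ≠ 0) :
    convPow (compoundPoisson ((k : ℝ≥0)⁻¹ • μ)) k = compoundPoisson μ := by
  refine Measure.ext_of_charFun (funext fun t => ?_)
  rw [charFun_convPow, charFun_compoundPoisson, charFun_compoundPoisson, ← Complex.exp_nat_mul,
    charFun_nnreal_smul_measure, measureReal_nnreal_smul_apply]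
  congr 1
  push_cast
  field_simp

/-- For any finite Borel measure `μ` on `ℝ` there is a Borel probability
measure `ν` with characteristic function `t ↦ exp (∫ (e^{itx} - 1) μ(dx))`, and `ν` is
infinitely divisible: each `k ≥ 1` admits a probability measure `νk` whose `k`-fold
convolution power is `ν`. -/
theorem exists_compound_poisson (μ : Measure ℝ) [IsFiniteMeasure μ] :
    ∃ ν : Measure ℝ, IsProbabilityMeasure ν ∧
      (∀ t : ℝ, ∫ x : ℝ, Complex.exp (Complex.I * t * x) ∂ν
        = Complex.exp (∫ x : ℝ, (Complex.exp (Complex.I * t * x) - 1) ∂μ)) ∧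
      ∀ k : ℕ, 0 < k → ∃ νk : Measure ℝ, IsProbabilityMeasure νk ∧ convPow νk k = ν := by
  refine ⟨compoundPoisson μ, inferInstance, fun t => ?_, fun k hk => ?_⟩
  · rw [← charFun_eq_integral_exp_I_mul, charFun_compoundPoisson, integral_exp_I_mul_sub_one]
  · exact ⟨compoundPoisson ((k : ℝ≥0)⁻¹ • μ), inferInstance,
      convPow_compoundPoisson_inv_smul μ hk.ne'⟩
end

section
/- Let K be a real 2n×2n matrix and let B : [0, ∞) → M_{2n}(ℝ) be a continuous family with B_0 = 0 satisfying the cocycle relations B_{t+s} = B_s + e^{sKᵀ} B_t e^{sK} for all s, t ≥ 0. Then there exists a real 2n×2n matrix C such that B_t = ∫_0^t e^{sKᵀ} C e^{sK} ds for all t ≥ 0. -/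
/-!
Write the cocycle relation as `f (t + s) = f s + A s (f t)` with `A s X = e^{sKᵀ} X e^{sK}`.
Integrating it over `s ∈ [0, h]` gives `(∫₀ʰ A) (f t) = F (t + h) - F t - F h` with `F` a
primitive of `f`. Since `A 0 = 1`, the operator `∫₀ʰ A` is invertible for small `h > 0`, so `f` is
differentiable, with some right derivative `c` at `0`. Differentiating
`f (t + u) = f t + A t (f u)` at `u = 0` then gives `f' t = A t c`, and `f 0 = 0` (the relation
at `s = t = 0`) yields `f t = ∫₀ᵗ A s c ds`.
-/

open Matrix MeasureTheory Set Filter Topology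

theorem HasDerivWithinAt.of_comp_const_add_Ici {E : Type*} [NormedAddCommGroup E]
    [NormedSpace ℝ E] {g : ℝ → E} {d : E} {t : ℝ}
    (h : HasDerivWithinAt (fun u => g (t + u)) d (Ici 0) 0) :
    HasDerivWithinAt g d (Ici t) t := by
  rw [hasDerivWithinAt_iff_hasFDerivWithinAt, hasFDerivWithinAt_comp_add_left] at h
  simpa [← Set.image_vadd, hasDerivWithinAt_iff_hasFDerivWithinAt] using h

theorem exists_pos_isUnit_intervalIntegral {R : Type*} [NormedRing R] [NormedAlgebra ℝ R]
    [CompleteSpace R] {A : ℝ → R} (hA : Continuous A) (hA0 : A 0 = 1) :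
    ∃ h > 0, IsUnit (∫ s in 0..h, A s) := by
  have hslope : Tendsto (slope (fun h => ∫ s in 0..h, A s) 0) (𝓝[>] 0) (𝓝 1) := by
    rw [← hA0]
    exact (hasDerivAt_iff_tendsto_slope.mp (hA.integral_hasStrictDerivAt 0 0).hasDerivAt).mono_left
      (nhdsWithin_mono 0 fun x hx => ne_of_gt hx)
  obtain ⟨h, hunit, hh⟩ :=
    ((hslope.eventually (Units.isOpen.mem_nhds isUnit_one)).and self_mem_nhdsWithin).exists
  refine ⟨h, hh, ?_⟩
  have hunit' : IsUnit (Units.mk0 h⁻¹ (inv_ne_zero hh.ne') • ∫ s in 0..h, A s) := by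
    simpa [slope] using hunit
  exact (isUnit_smul_iff _ _).mp hunit'

section Cocycle

variable {E : Type*} [NormedAddCommGroup E] [NormedSpace ℝ E] {A : ℝ → E →L[ℝ] E} {f : ℝ → E}

def IsCocycle (A : ℝ → E →L[ℝ] E) (f : ℝ → E) : Prop :=
  ∀ s t, 0 ≤ s → 0 ≤ t → f (t + s) = f s + A s (f t)

theorem IsCocycle.apply_zero (hco : IsCocycle A f) (hA0 : A 0 = 1) : f 0 = 0 := by
  simpa [hA0] using hco 0 0 le_rfl le_rfl

theorem IsCocycle.hasDerivWithinAt_Ici (hco : IsCocycle A f) {c : E}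
    (hc : HasDerivWithinAt f c (Ici 0) 0) {t : ℝ} (ht : 0 ≤ t) :
    HasDerivWithinAt f (A t c) (Ici t) t := by
  refine HasDerivWithinAt.of_comp_const_add_Ici ?_
  refine (((A t).hasFDerivAt.comp_hasDerivWithinAt 0 hc).const_add (f t)).congr
    (fun u hu => ?_) ?_
  · rw [add_comm]; exact hco t u ht hu
  · rw [add_comm]; exact hco t 0 ht le_rfl

theorem IsCocycle.intervalIntegral_apply (hco : IsCocycle A f) (hA : Continuous A)
    (hf : ContinuousOn f (Ici 0)) {t h : ℝ} (ht : 0 ≤ t) (hh : 0 ≤ h) :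
    (∫ s in 0..h, A s) (f t) = (∫ s in 0..t + h, f s) - (∫ s in 0..t, f s) - ∫ s in 0..h, f s := by
  have hfint : ∀ b, 0 ≤ b → IntervalIntegrable f volume 0 b := fun b hb =>
    (hf.mono fun x hx => (le_inf le_rfl hb).trans hx.1).intervalIntegrable
  have hshift : ∫ s in 0..h, f (t + s) = (∫ s in 0..t + h, f s) - ∫ s in 0..t, f s := by
    rw [intervalIntegral.integral_comp_add_left, add_zero,
      intervalIntegral.integral_interval_sub_left (hfint _ (by positivity)) (hfint t ht)]
  rw [← hshift, intervalIntegral.integral_congr (g := fun s => f s + A s (f t)) fun s hs =>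
      hco s t ((le_inf le_rfl hh).trans hs.1) ht,
    intervalIntegral.integral_add (hfint h hh)
      ((hA.clm_apply continuous_const).intervalIntegrable 0 h),
    ContinuousLinearMap.intervalIntegral_apply (hA.intervalIntegrable 0 h)]
  abel

variable [CompleteSpace E]

theorem IsCocycle.exists_hasDerivWithinAt_zero (hco : IsCocycle A f) (hA : Continuous A)
    (hA0 : A 0 = 1) (hf : ContinuousOn f (Ici 0)) :
    ∃ c, HasDerivWithinAt f c (Ici 0) 0 := by
  obtain ⟨h, hh, hunit⟩ := exists_pos_isUnit_intervalIntegral hA hA0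
  set T := Ring.inverse (∫ s in 0..h, A s)
  set F := fun t => ∫ s in 0..t, f s
  have hT : ∀ x, T ((∫ s in 0..h, A s) x) = x := fun x => by
    rw [← mul_apply_eq_comp, Ring.inverse_mul_cancel _ hunit, one_apply_eq_self]
  have hfF : ∀ t ∈ Ici (0 : ℝ), f t = T (F (t + h) - F t - F h) := fun t ht => by
    rw [← hco.intervalIntegral_apply hA hf ht hh.le, hT]
  have hFh : HasDerivAt (fun t => F (t + h)) (f h) 0 := by
    refine HasDerivAt.comp_add_const 0 h ?_
    rw [zero_add]
    exact intervalIntegral.integral_hasDerivAt_right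
      (hf.mono fun x hx => (le_inf le_rfl hh.le).trans hx.1).intervalIntegrable
      ((hf.stronglyMeasurableAtFilter_nhdsWithin measurableSet_Ici h).filter_mono
        (nhdsWithin_eq_nhds.2 (Ici_mem_nhds hh)).ge)
      (hf.continuousAt (Ici_mem_nhds hh))
  have hF0 : HasDerivWithinAt F (f 0) (Ici 0) 0 :=
    intervalIntegral.integral_hasDerivWithinAt_right (by simp)
      ((hf.stronglyMeasurableAtFilter_nhdsWithin measurableSet_Ici 0).filter_mono
        (nhdsWithin_mono _ Ioi_subset_Ici_self))
      ((hf.continuousWithinAt self_mem_Ici).mono Ioi_subset_Ici_self)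
  exact ⟨_, (T.hasFDerivAt.comp_hasDerivWithinAt 0
    ((hFh.hasDerivWithinAt.sub hF0).sub_const (F h))).congr hfF (hfF 0 self_mem_Ici)⟩

theorem IsCocycle.exists_eq_intervalIntegral (hco : IsCocycle A f) (hA : Continuous A)
    (hA0 : A 0 = 1) (hf : ContinuousOn f (Ici 0)) :
    ∃ c, ∀ t, 0 ≤ t → f t = ∫ s in 0..t, A s c := by
  obtain ⟨c, hc⟩ := hco.exists_hasDerivWithinAt_zero hA hA0 hf
  refine ⟨c, fun t ht => ?_⟩
  rw [intervalIntegral.integral_eq_sub_of_hasDeriv_right_of_le ht (hf.mono Icc_subset_Ici_self)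
    (fun x hx => (hco.hasDerivWithinAt_Ici hc hx.1.le).mono Ioi_subset_Ici_self)
    ((hA.clm_apply continuous_const).intervalIntegrable 0 t),
    hco.apply_zero hA0, sub_zero]

end Cocycle

theorem exists_eq_intervalIntegral_mul_mul_of_cocycle {R : Type*} [NormedRing R]
    [NormedAlgebra ℝ R] [CompleteSpace R] {P Q f : ℝ → R} (hP : Continuous P)
    (hQ : Continuous Q) (hP0 : P 0 = 1) (hQ0 : Q 0 = 1) (hf : ContinuousOn f (Ici 0))
    (hco : ∀ s t, 0 ≤ s → 0 ≤ t → f (t + s) = f s + Q s * f t * P s) :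
    ∃ c, ∀ t, 0 ≤ t → f t = ∫ s in 0..t, Q s * c * P s := by
  set A := fun s => ContinuousLinearMap.mulLeftRight ℝ R (Q s) (P s)
  have hA : Continuous A := by fun_prop
  have hA0 : A 0 = 1 := by
    ext x
    simp [A, hP0, hQ0]
  have hAf : IsCocycle A f := by simpa [IsCocycle, A] using hco
  simpa [A] using hAf.exists_eq_intervalIntegral hA hA0 hf

open scoped Matrix.Norms.Operator in
theorem Matrix.intervalIntegral_apply {m n : Type*} [Fintype m] [Fintype n]
    {M : ℝ → Matrix m n ℝ} (hM : Continuous M) (a b : ℝ) (i : m) (j : n) :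
    (∫ s in a..b, M s) i j = ∫ s in a..b, M s i j :=
  ((Matrix.entryLinearMap ℝ ℝ i j).toContinuousLinearMap.intervalIntegral_comp_comm
    (hM.intervalIntegrable a b)).symm

theorem cocycle_is_integral_general {n : ℕ}
    (K : Matrix (Fin n ⊕ Fin n) (Fin n ⊕ Fin n) ℝ)
    (B : ℝ → Matrix (Fin n ⊕ Fin n) (Fin n ⊕ Fin n) ℝ)
    (hBcont : ContinuousOn B (Set.Ici (0 : ℝ)))
    (hcocycle : ∀ s t : ℝ, 0 ≤ s → 0 ≤ t →
      B (t + s) = B s + (NormedSpace.exp (s • K))ᵀ * B t * NormedSpace.exp (s • K)) :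
    ∃ C : Matrix (Fin n ⊕ Fin n) (Fin n ⊕ Fin n) ℝ, ∀ t : ℝ, 0 ≤ t →
      B t = Matrix.of fun i j => ∫ s in (0:ℝ)..t,
        (NormedSpace.exp (s • Kᵀ) * C * NormedSpace.exp (s • K)) i j := by
  -- The choice of norm is immaterial: it only makes matrices a Banach algebra.
  open scoped Matrix.Norms.Operator in
  · have hexpT : ∀ s : ℝ, NormedSpace.exp (s • Kᵀ) = (NormedSpace.exp (s • K))ᵀ := fun s => by
      rw [← transpose_smul, exp_transpose]
    obtain ⟨C, hC⟩ := exists_eq_intervalIntegral_mul_mul_of_cocycle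
      (P := fun s => NormedSpace.exp (s • K)) (Q := fun s => NormedSpace.exp (s • Kᵀ))
      (by fun_prop) (by fun_prop) (by simp) (by simp) hBcont (by simpa [hexpT] using hcocycle)
    refine ⟨C, fun t ht => ?_⟩
    ext i j
    rw [hC t ht, of_apply, Matrix.intervalIntegral_apply (by fun_prop)]

/-- If `B : [0,∞) → M_{2n}(ℝ)` is continuous with `B 0 = 0` and satisfies
the cocycle relations `B (t + s) = B s + e^{sKᵀ} B t e^{sK}` for all `s, t ≥ 0`, then
`B t = ∫_0^t e^{sKᵀ} C e^{sK} ds` (entrywise) for some real matrix `C`. -/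
theorem cocycle_is_integral {n : ℕ}
    (K : Matrix (Fin n ⊕ Fin n) (Fin n ⊕ Fin n) ℝ)
    (B : ℝ → Matrix (Fin n ⊕ Fin n) (Fin n ⊕ Fin n) ℝ)
    (hBcont : ContinuousOn B (Set.Ici (0 : ℝ)))
    (hB0 : B 0 = 0)
    (hcocycle : ∀ s t : ℝ, 0 ≤ s → 0 ≤ t →
      B (t + s) = B s + (NormedSpace.exp (s • K))ᵀ * B t * NormedSpace.exp (s • K)) :
    ∃ C : Matrix (Fin n ⊕ Fin n) (Fin n ⊕ Fin n) ℝ, ∀ t : ℝ, 0 ≤ t →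
      B t = Matrix.of fun i j => ∫ s in (0:ℝ)..t,
        (NormedSpace.exp (s • Kᵀ) * C * NormedSpace.exp (s • K)) i j :=
  cocycle_is_integral_general K B hBcont hcocycle
end

section
/- Let J denote the real 2n×2n matrix J = [[0, −I_n],[I_n, 0]], and let K, C be real 2n×2n matrices with C symmetric. Then the following are equivalent: (i) for every t ≥ 0, the complex Hermitian matrix ∫_0^t e^{sKᵀ} (C − i(KᵀJ + JK)) e^{sK} ds is positive semidefinite; (ii) the complex Hermitian matrix C + i(KᵀJ + JK) is positive semidefinite. -/
open Matrix
open scoped MeasureTheory ComplexOrder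

/-- The real `2n × 2n` matrix `J = [[0, -I_n], [I_n, 0]]`. -/
def Jmat (n : ℕ) : Matrix (Fin n ⊕ Fin n) (Fin n ⊕ Fin n) ℝ :=
  Matrix.fromBlocks 0 (-1) 1 0

/-! With `A = KᵀJ + JK` skew-symmetric, the Hermitian matrices `C ∓ iA` are transposes of each
other, so one is positive semidefinite iff the other is. The integrand is
`(e^{sK})ᴴ (C - iA) e^{sK}`, so positivity of `C - iA` gives positivity of every integral;
conversely `t⁻¹ ∫₀ᵗ` of the integrand tends to `C - iA` as `t → 0⁺`, and positivity passes to the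
limit. -/

open MeasureTheory

theorem Continuous.nonneg_of_intervalIntegral_nonneg {E : Type*} [NormedAddCommGroup E]
    [NormedSpace ℝ E] [CompleteSpace E] [PartialOrder E] [IsOrderedModule ℝ E]
    [ClosedIciTopology E] {f : ℝ → E} (hf : Continuous f) {a : ℝ}
    (h : ∀ t, a < t → 0 ≤ ∫ s in a..t, f s) : 0 ≤ f a := by
  have hslope := (hasDerivWithinAt_iff_tendsto_slope.mp
    ((hf.integral_hasStrictDerivAt a a).hasDerivAt.hasDerivWithinAt (s := Set.Ioi a)))
  rw [Set.sdiff_singleton_eq_self Set.self_notMem_Ioi] at hslope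
  refine ge_of_tendsto hslope ?_
  filter_upwards [self_mem_nhdsWithin] with t (ht : a < t)
  rw [slope_def_module, intervalIntegral.integral_same, sub_zero]
  exact smul_nonneg (inv_nonneg.mpr (sub_nonneg.mpr ht.le)) (h t ht)

namespace Matrix

theorem conjTranspose_map_ofReal {m n : Type*} (M : Matrix m n ℝ) :
    (M.map (Complex.ofReal ·))ᴴ = Mᵀ.map (Complex.ofReal ·) := by
  rw [← conjTranspose_eq_transpose_of_trivial,
    conjTranspose_map _ fun x => (Complex.conj_ofReal x).symm]

open Complex in
theorem isHermitian_map_ofReal_sub_I_smul {m : Type*} {C A : Matrix m m ℝ} (hC : C.IsSymm)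
    (hA : Aᵀ = -A) : (C.map (ofReal ·) - I • A.map (ofReal ·)).IsHermitian := by
  rw [IsHermitian, conjTranspose_sub, conjTranspose_smul, conjTranspose_map_ofReal,
    conjTranspose_map_ofReal, hC.eq, hA, star_def, conj_I]
  ext i j
  simp [sub_eq_add_neg]

open Complex in
theorem transpose_map_ofReal_sub_I_smul {m : Type*} {C A : Matrix m m ℝ} (hC : C.IsSymm)
    (hA : Aᵀ = -A) :
    (C.map (ofReal ·) - I • A.map (ofReal ·))ᵀ = C.map (ofReal ·) + I • A.map (ofReal ·) := by
  rw [transpose_sub, transpose_smul, ← transpose_map, ← transpose_map, hC.eq, hA]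
  ext i j
  simp [sub_eq_add_neg]

section Integral

variable {m 𝕜 : Type*} [RCLike 𝕜] {G : ℝ → Matrix m m 𝕜} {a b : ℝ}

theorem isHermitian_of_intervalIntegral (hG : ∀ s, (G s).IsHermitian) :
    (of fun i j => ∫ s in a..b, G s i j).IsHermitian := by
  ext i j
  rw [conjTranspose_apply, of_apply, of_apply, RCLike.star_def,
    ← intervalIntegral.intervalIntegral_conj]
  exact intervalIntegral.integral_congr fun s _ => (hG s).apply i j

variable [Fintype m]

theorem star_dotProduct_mulVec_of_intervalIntegral
    (hG : ∀ i j, IntervalIntegrable (fun s => G s i j) volume a b) (x : m → 𝕜) :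
    star x ⬝ᵥ (of (fun i j => ∫ s in a..b, G s i j) *ᵥ x) =
      ∫ s in a..b, star x ⬝ᵥ (G s *ᵥ x) := by
  have hint : ∀ i j, IntervalIntegrable (fun s => star x i * (G s i j * x j)) volume a b :=
    fun i j => ((hG i j).mul_const _).const_mul _
  simp only [dotProduct, mulVec, of_apply, Finset.mul_sum]
  rw [intervalIntegral.integral_finsetSum fun i _ => by
    simpa only [Finset.sum_fn] using IntervalIntegrable.sum Finset.univ fun j _ => hint i j]
  refine Finset.sum_congr rfl fun i _ => ?_
  rw [intervalIntegral.integral_finsetSum fun j _ => hint i j]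
  simp only [intervalIntegral.integral_const_mul, intervalIntegral.integral_mul_const]

theorem PosSemidef.intervalIntegral (hab : a ≤ b) (hG : Continuous G)
    (hpos : ∀ s, (G s).PosSemidef) : (of fun i j => ∫ s in a..b, G s i j).PosSemidef := by
  refine .of_dotProduct_mulVec_nonneg
    (isHermitian_of_intervalIntegral fun s => (hpos s).isHermitian) fun x => ?_
  rw [star_dotProduct_mulVec_of_intervalIntegral
    (fun i j => (hG.matrix_elem i j).intervalIntegrable a b), intervalIntegral.integral_of_le hab]
  exact integral_nonneg fun s => (hpos s).dotProduct_mulVec_nonneg x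

theorem PosSemidef.of_intervalIntegral (hG : Continuous G) (ha : (G a).IsHermitian)
    (h : ∀ t, a < t → (of fun i j => ∫ s in a..t, G s i j).PosSemidef) : (G a).PosSemidef := by
  refine .of_dotProduct_mulVec_nonneg ha fun x => ?_
  have hquad : Continuous fun s => star x ⬝ᵥ (G s *ᵥ x) :=
    continuous_const.dotProduct (hG.matrix_mulVec continuous_const)
  refine hquad.nonneg_of_intervalIntegral_nonneg fun t ht => ?_
  rw [← star_dotProduct_mulVec_of_intervalIntegral
    (fun i j => (hG.matrix_elem i j).intervalIntegrable a t)]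
  exact (h t ht).dotProduct_mulVec_nonneg x

end Integral

variable {m : Type*} [Fintype m]

theorem transpose_mul_add_mul_of_transpose_eq_neg {R : Type*} [CommRing R] {J : Matrix m m R}
    (hJ : Jᵀ = -J) (K : Matrix m m R) : (Kᵀ * J + J * K)ᵀ = -(Kᵀ * J + J * K) := by
  rw [transpose_add, transpose_mul, transpose_mul, transpose_transpose, hJ]
  noncomm_ring

section

attribute [local instance] Matrix.linftyOpNormedRing Matrix.linftyOpNormedAlgebra

theorem continuous_exp_smul [DecidableEq m] (K : Matrix m m ℝ) :
    Continuous fun s : ℝ => NormedSpace.exp (s • K) :=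
  NormedSpace.exp_continuous.comp (continuous_id.smul continuous_const)

end

end Matrix

theorem Jmat_transpose (n : ℕ) : (Jmat n)ᵀ = -Jmat n := by
  rw [Jmat, fromBlocks_transpose, fromBlocks_neg]
  simp

open NormedSpace in
/-- For real `2n × 2n` matrices `K`, `C` with `C` symmetric, the complex
Hermitian matrices `∫_0^t e^{sKᵀ} (C - i(KᵀJ + JK)) e^{sK} ds` are positive semidefinite
for all `t ≥ 0` if and only if `C + i(KᵀJ + JK)` is positive semidefinite. -/
theorem integral_posSemidef_iff_complex {n : ℕ}
    (K C : Matrix (Fin n ⊕ Fin n) (Fin n ⊕ Fin n) ℝ) (hC : C.IsSymm) :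
    (∀ t : ℝ, 0 ≤ t →
      (Matrix.of fun i j => ∫ s in (0:ℝ)..t,
        ((NormedSpace.exp (s • Kᵀ)).map (Complex.ofReal ·)
          * (C.map (Complex.ofReal ·)
              - Complex.I • ((Kᵀ * Jmat n + Jmat n * K).map (Complex.ofReal ·)))
          * (NormedSpace.exp (s • K)).map (Complex.ofReal ·)) i j).PosSemidef)
    ↔ (C.map (Complex.ofReal ·)
        + Complex.I • ((Kᵀ * Jmat n + Jmat n * K).map (Complex.ofReal ·))).PosSemidef := by
  have hA := transpose_mul_add_mul_of_transpose_eq_neg (Jmat_transpose n) K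
  set M := C.map (Complex.ofReal ·)
    - Complex.I • (Kᵀ * Jmat n + Jmat n * K).map (Complex.ofReal ·)
  set B : ℝ → Matrix (Fin n ⊕ Fin n) (Fin n ⊕ Fin n) ℂ :=
    fun s => (exp (s • K)).map (Complex.ofReal ·)
  have hB : ∀ s, (B s)ᴴ = (exp (s • Kᵀ)).map (Complex.ofReal ·) := fun s => by
    rw [conjTranspose_map_ofReal, ← exp_transpose, transpose_smul]
  have hBcont : Continuous B := (continuous_exp_smul K).matrix_map Complex.continuous_ofReal
  have hB0 : B 0 = 1 := by simp [B]
  have hG : Continuous fun s => (B s)ᴴ * M * B s :=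
    (hBcont.matrix_conjTranspose.matrix_mul continuous_const).matrix_mul hBcont
  simp_rw [← hB]
  rw [← transpose_map_ofReal_sub_I_smul hC hA, posSemidef_transpose_iff]
  constructor
  · intro h
    have hM : ((B 0)ᴴ * M * B 0).IsHermitian := by
      simpa [hB0] using isHermitian_map_ofReal_sub_I_smul hC hA
    simpa [hB0] using PosSemidef.of_intervalIntegral hG hM fun t ht => h t ht.le
  · intro hM t ht
    exact PosSemidef.intervalIntegral ht hG fun s => hM.conjTranspose_mul_mul_same (B s)
end

section
/- Let J denote the real 2n×2n matrix J = [[0, −I_n],[I_n, 0]], let K, C be real 2n×2n matrices, and set A_t = e^{tK}, B_t = ∫_0^t e^{sKᵀ} C e^{sK} ds. Then for every t ≥ 0 one has the identity B_t + i(J − A_tᵀ J A_t) = ∫_0^t e^{sKᵀ} (C − i(KᵀJ + JK)) e^{sK} ds. Consequently, if C + i(KᵀJ + JK) is positive semidefinite, then for every t ≥ 0 the Hermitian matrix B_t + i(J − A_tᵀ J A_t) is positive semidefinite. -/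
/-!
Differentiating `s ↦ e^{sKᵀ} M e^{sK}` gives `e^{sKᵀ} (KᵀM + MK) e^{sK}`, so by the fundamental
theorem of calculus with `M = J`, `J - A_tᵀ J A_t = -∫_0^t e^{sKᵀ} (KᵀJ + JK) e^{sK} ds`; this is
the identity. As `C` and `KᵀJ + JK` are real, `C - i(KᵀJ + JK)` is the entrywise conjugate of
`C + i(KᵀJ + JK)` and hence positive semidefinite. The integrand is then its congruence by `e^{sK}`,
positive semidefinite for every `s`, and so is the integral, since quadratic forms commute with it.
-/

open Matrix
open scoped MeasureTheory ComplexOrder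

/-- `B t = ∫_0^t e^{sKᵀ} C e^{sK} ds` (entrywise interval integral). -/
noncomputable def Bmat {n : ℕ} (K C : Matrix (Fin n ⊕ Fin n) (Fin n ⊕ Fin n) ℝ) (t : ℝ) :
    Matrix (Fin n ⊕ Fin n) (Fin n ⊕ Fin n) ℝ :=
  Matrix.of fun i j => ∫ s in (0:ℝ)..t,
    (NormedSpace.exp (s • Kᵀ) * C * NormedSpace.exp (s • K)) i j

open NormedSpace

section MatrixExponential

variable {ι : Type*} [Fintype ι] [DecidableEq ι]

attribute [local instance] Matrix.linftyOpNormedAddCommGroup Matrix.linftyOpNormedRing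
  Matrix.linftyOpNormedAlgebra

theorem Matrix.continuous_exp_smul_s11 (K : Matrix ι ι ℝ) : Continuous fun s : ℝ => exp (s • K) :=
  exp_continuous.comp (continuous_id.smul continuous_const)

theorem Matrix.hasDerivAt_exp_smul_transpose_mul_mul_exp_smul (K M : Matrix ι ι ℝ) (s : ℝ) :
    HasDerivAt (fun u : ℝ => exp (u • Kᵀ) * M * exp (u • K))
      (exp (s • Kᵀ) * (Kᵀ * M + M * K) * exp (s • K)) s :=
  (((hasDerivAt_exp_smul_const Kᵀ s).mul_const M).mul
    (hasDerivAt_exp_smul_const' K s)).congr_deriv (by noncomm_ring)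

theorem Matrix.intervalIntegral_exp_smul_transpose_mul_mul_exp_smul_apply (K M : Matrix ι ι ℝ)
    (t : ℝ) (i j : ι) :
    ∫ s in (0:ℝ)..t, (exp (s • Kᵀ) * (Kᵀ * M + M * K) * exp (s • K)) i j
      = ((exp (t • K))ᵀ * M * exp (t • K) - M) i j := by
  have hderiv (s : ℝ) : HasDerivAt (fun u : ℝ => (exp (u • Kᵀ) * M * exp (u • K)) i j)
      ((exp (s • Kᵀ) * (Kᵀ * M + M * K) * exp (s • K)) i j) s :=
    ((Matrix.entryLinearMap ℝ ℝ i j).toContinuousLinearMap.hasFDerivAt).comp_hasDerivAt s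
      (hasDerivAt_exp_smul_transpose_mul_mul_exp_smul K M s)
  have hcont : Continuous fun s : ℝ => exp (s • Kᵀ) * (Kᵀ * M + M * K) * exp (s • K) :=
    ((continuous_exp_smul_s11 Kᵀ).mul continuous_const).mul (continuous_exp_smul_s11 K)
  rw [intervalIntegral.integral_eq_sub_of_hasDerivAt (fun s _ => hderiv s)
    ((hcont.matrix_elem i j).intervalIntegrable 0 t)]
  simp [← Matrix.transpose_smul, Matrix.exp_transpose]

end MatrixExponential

section Complexification

variable {ι : Type*}

theorem Matrix.map_ofReal_mul [Fintype ι] (P Q : Matrix ι ι ℝ) :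
    (P * Q).map (Complex.ofReal ·) = P.map (Complex.ofReal ·) * Q.map (Complex.ofReal ·) :=
  Matrix.map_mul (f := Complex.ofRealHom)

theorem Matrix.map_ofReal_transpose (P : Matrix ι ι ℝ) :
    Pᵀ.map (Complex.ofReal ·) = (P.map (Complex.ofReal ·))ᴴ := by
  ext i j
  simp

theorem Matrix.map_ofReal_mul_sub_I_smul_mul_apply [Fintype ι] (E C D F : Matrix ι ι ℝ)
    (i j : ι) :
    (E.map (Complex.ofReal ·) * (C.map (Complex.ofReal ·) - Complex.I • D.map (Complex.ofReal ·))
        * F.map (Complex.ofReal ·)) i j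
      = ((E * C * F) i j : ℂ) - Complex.I * ((E * D * F) i j : ℝ) := by
  simp only [mul_sub, sub_mul, Matrix.mul_smul, Matrix.smul_mul, ← Matrix.map_ofReal_mul,
    Matrix.sub_apply, Matrix.smul_apply, Matrix.map_apply, smul_eq_mul]

theorem Matrix.map_star_add_I_smul (C D : Matrix ι ι ℝ) :
    (C.map (Complex.ofReal ·) + Complex.I • D.map (Complex.ofReal ·)).map star
      = C.map (Complex.ofReal ·) - Complex.I • D.map (Complex.ofReal ·) := by
  ext i j
  simp [sub_eq_add_neg]

theorem Matrix.PosSemidef.map_star {M : Matrix ι ι ℂ} (hM : M.PosSemidef) :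
    (M.map star).PosSemidef :=
  hM.conjTranspose.transpose

end Complexification

section IntervalIntegral

variable {ι : Type*} [Fintype ι] {f : ℝ → Matrix ι ι ℂ} {t : ℝ}

theorem Matrix.dotProduct_mulVec_of_intervalIntegral
    (hf : ∀ i j, IntervalIntegrable (fun s => f s i j) MeasureTheory.volume 0 t) (x : ι → ℂ) :
    star x ⬝ᵥ ((Matrix.of fun i j => ∫ s in (0:ℝ)..t, f s i j) *ᵥ x)
      = ∫ s in (0:ℝ)..t, star x ⬝ᵥ (f s *ᵥ x) := by
  simp only [dotProduct, mulVec, of_apply, Pi.star_apply, Finset.mul_sum,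
    ← intervalIntegral.integral_mul_const, ← intervalIntegral.integral_const_mul]
  have hint (i j : ι) : IntervalIntegrable (fun s => star (x i) * (f s i j * x j))
      MeasureTheory.volume 0 t :=
    ((hf i j).mul_const _).const_mul _
  have hrow (i : ι) : IntervalIntegrable (fun s => ∑ j, star (x i) * (f s i j * x j))
      MeasureTheory.volume 0 t := by
    simpa only [← Finset.sum_fn] using IntervalIntegrable.sum _ fun j _ => hint i j
  rw [intervalIntegral.integral_finsetSum fun i _ => hrow i]
  exact Finset.sum_congr rfl fun i _ =>
    (intervalIntegral.integral_finsetSum fun j _ => hint i j).symm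

theorem Matrix.posSemidef_of_intervalIntegral (ht : 0 ≤ t)
    (hf : ∀ i j, IntervalIntegrable (fun s => f s i j) MeasureTheory.volume 0 t)
    (hpsd : ∀ s ∈ Set.Icc 0 t, (f s).PosSemidef) :
    (Matrix.of fun i j => ∫ s in (0:ℝ)..t, f s i j).PosSemidef := by
  refine .of_dotProduct_mulVec_nonneg ?_ fun x => ?_
  · ext i j
    rw [conjTranspose_apply, of_apply, of_apply, Complex.star_def,
      ← intervalIntegral.intervalIntegral_conj]
    refine intervalIntegral.integral_congr fun s hs => ?_
    rw [Set.uIcc_of_le ht] at hs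
    exact congr_fun₂ (hpsd s hs).isHermitian i j
  · rw [dotProduct_mulVec_of_intervalIntegral hf, intervalIntegral.integral_of_le ht]
    refine MeasureTheory.integral_nonneg_of_ae <|
      (MeasureTheory.ae_restrict_iff' measurableSet_Ioc).mpr <| .of_forall fun s hs => ?_
    exact (hpsd s (Set.Ioc_subset_Icc_self hs)).dotProduct_mulVec_nonneg x

end IntervalIntegral

theorem Bmat_map_ofReal_add_I_smul_eq_intervalIntegral {n : ℕ}
    (K C M : Matrix (Fin n ⊕ Fin n) (Fin n ⊕ Fin n) ℝ) (t : ℝ) :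
    (Bmat K C t).map (Complex.ofReal ·)
        + Complex.I • ((M - (exp (t • K))ᵀ * M * exp (t • K)).map (Complex.ofReal ·))
      = Matrix.of fun i j => ∫ s in (0:ℝ)..t,
          ((exp (s • Kᵀ)).map (Complex.ofReal ·)
            * (C.map (Complex.ofReal ·) - Complex.I • ((Kᵀ * M + M * K).map (Complex.ofReal ·)))
            * (exp (s • K)).map (Complex.ofReal ·)) i j := by
  ext i j
  have hint (N : Matrix (Fin n ⊕ Fin n) (Fin n ⊕ Fin n) ℝ) :
      IntervalIntegrable (fun s => ((exp (s • Kᵀ) * N * exp (s • K)) i j : ℂ))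
        MeasureTheory.volume 0 t :=
    (Complex.continuous_ofReal.comp ((((continuous_exp_smul_s11 Kᵀ).mul continuous_const).mul
      (continuous_exp_smul_s11 K)).matrix_elem i j)).intervalIntegrable 0 t
  simp only [of_apply, map_ofReal_mul_sub_I_smul_mul_apply]
  rw [intervalIntegral.integral_sub (hint C) ((hint _).const_mul _),
    intervalIntegral.integral_const_mul, intervalIntegral.integral_ofReal,
    intervalIntegral.integral_ofReal, intervalIntegral_exp_smul_transpose_mul_mul_exp_smul_apply]
  simp only [Bmat, Matrix.add_apply, Matrix.smul_apply, Matrix.sub_apply, map_apply, of_apply,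
    smul_eq_mul]
  push_cast
  ring

/-- With `A t = e^{tK}` and `B t = ∫_0^t e^{sKᵀ} C e^{sK} ds`, for each
`t ≥ 0` one has `B t + i(J - (A t)ᵀ J (A t)) = ∫_0^t e^{sKᵀ} (C - i(KᵀJ + JK)) e^{sK} ds`;
consequently, if `C + i(KᵀJ + JK)` is positive semidefinite, then so is
`B t + i(J - (A t)ᵀ J (A t))` for every `t ≥ 0`. -/
theorem Bmat_add_I_smul_eq_integral {n : ℕ}
    (K C : Matrix (Fin n ⊕ Fin n) (Fin n ⊕ Fin n) ℝ) :
    (∀ t : ℝ, 0 ≤ t →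
      (Bmat K C t).map (Complex.ofReal ·)
        + Complex.I • ((Jmat n
            - (NormedSpace.exp (t • K))ᵀ * Jmat n * NormedSpace.exp (t • K)).map
              (Complex.ofReal ·))
      = Matrix.of fun i j => ∫ s in (0:ℝ)..t,
          ((NormedSpace.exp (s • Kᵀ)).map (Complex.ofReal ·)
            * (C.map (Complex.ofReal ·)
                - Complex.I • ((Kᵀ * Jmat n + Jmat n * K).map (Complex.ofReal ·)))
            * (NormedSpace.exp (s • K)).map (Complex.ofReal ·)) i j) ∧
    ((C.map (Complex.ofReal ·)
        + Complex.I • ((Kᵀ * Jmat n + Jmat n * K).map (Complex.ofReal ·))).PosSemidef →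
      ∀ t : ℝ, 0 ≤ t →
        ((Bmat K C t).map (Complex.ofReal ·)
          + Complex.I • ((Jmat n
              - (NormedSpace.exp (t • K))ᵀ * Jmat n * NormedSpace.exp (t • K)).map
                (Complex.ofReal ·))).PosSemidef) := by
  refine ⟨fun t _ => Bmat_map_ofReal_add_I_smul_eq_intervalIntegral K C (Jmat n) t,
    fun hpsd t ht => ?_⟩
  rw [Bmat_map_ofReal_add_I_smul_eq_intervalIntegral]
  have hpsd_conj := map_star_add_I_smul C (Kᵀ * Jmat n + Jmat n * K) ▸ hpsd.map_star
  refine posSemidef_of_intervalIntegral ht (fun i j => ?_) fun s _ => ?_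
  · exact ((((continuous_exp_smul_s11 Kᵀ).matrix_map Complex.continuous_ofReal).mul
      continuous_const).mul ((continuous_exp_smul_s11 K).matrix_map Complex.continuous_ofReal)
      |>.matrix_elem i j).intervalIntegrable 0 t
  · rw [← transpose_smul, exp_transpose, map_ofReal_transpose]
    exact hpsd_conj.conjTranspose_mul_mul_same _
end

section
/- Let J denote the real 2n×2n matrix J = [[0, −I_n],[I_n, 0]]. Let A, B, S be real 2n×2n matrices with B and S symmetric. If the Hermitian matrices 2S + iJ and B + i(J − AᵀJA) are both positive semidefinite, then the Hermitian matrix 2(AᵀSA + ½B) + iJ is positive semidefinite. -/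
open Matrix
open scoped ComplexOrder

/-!
Conjugating `2S + iJ` by the real matrix `A` gives `2AᵀSA + iAᵀJA`, which is again positive
semidefinite; adding the positive semidefinite `B + i(J - AᵀJA)` cancels `AᵀJA` and leaves
`2AᵀSA + B + iJ`.
-/

namespace Matrix

variable {ι : Type*}

def complexify (M L : Matrix ι ι ℝ) : Matrix ι ι ℂ :=
  M.map (Complex.ofReal ·) + Complex.I • L.map (Complex.ofReal ·)

theorem complexify_add (M L M' L' : Matrix ι ι ℝ) :
    complexify M L + complexify M' L' = complexify (M + M') (L + L') := by
  ext i j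
  simp only [complexify, add_apply, smul_apply, map_apply, Complex.ofReal_add, smul_eq_mul]
  ring

theorem conjTranspose_map_ofReal_s12 (X : Matrix ι ι ℝ) :
    (X.map (Complex.ofReal ·))ᴴ = Xᵀ.map (Complex.ofReal ·) := by
  ext i j
  simp

theorem conjTranspose_mul_complexify_mul [Fintype ι] (M L X : Matrix ι ι ℝ) :
    (X.map (Complex.ofReal ·))ᴴ * complexify M L * X.map (Complex.ofReal ·)
      = complexify (Xᵀ * M * X) (Xᵀ * L * X) := by
  have hmul : ∀ Y Z : Matrix ι ι ℝ,
      (Y * Z).map (Complex.ofReal ·) = Y.map (Complex.ofReal ·) * Z.map (Complex.ofReal ·) :=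
    fun Y Z => Matrix.map_mul (f := Complex.ofRealHom)
  rw [conjTranspose_map_ofReal_s12, complexify, complexify, hmul, hmul, hmul, hmul, mul_add,
    add_mul, Matrix.mul_smul, Matrix.smul_mul]

theorem PosSemidef.complexify_conj [Fintype ι] {M L : Matrix ι ι ℝ}
    (h : (complexify M L).PosSemidef) (X : Matrix ι ι ℝ) :
    (complexify (Xᵀ * M * X) (Xᵀ * L * X)).PosSemidef := by
  rw [← conjTranspose_mul_complexify_mul]
  exact h.conjTranspose_mul_mul_same _

end Matrix

theorem gaussian_covariance_transform_posSemidef_general {n : ℕ}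
    (A B S : Matrix (Fin n ⊕ Fin n) (Fin n ⊕ Fin n) ℝ)
    (h1 : (((2 : ℝ) • S).map (Complex.ofReal ·)
        + Complex.I • ((Jmat n).map (Complex.ofReal ·))).PosSemidef)
    (h2 : (B.map (Complex.ofReal ·)
        + Complex.I • ((Jmat n - Aᵀ * Jmat n * A).map (Complex.ofReal ·))).PosSemidef) :
    (((2 : ℝ) • (Aᵀ * S * A + (1 / 2 : ℝ) • B)).map (Complex.ofReal ·)
        + Complex.I • ((Jmat n).map (Complex.ofReal ·))).PosSemidef := by
  change (complexify ((2 : ℝ) • (Aᵀ * S * A + (1 / 2 : ℝ) • B)) (Jmat n)).PosSemidef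
  have hsum : (complexify (Aᵀ * ((2 : ℝ) • S) * A + B)
      (Aᵀ * Jmat n * A + (Jmat n - Aᵀ * Jmat n * A))).PosSemidef := by
    rw [← complexify_add]
    exact (PosSemidef.complexify_conj h1 A).add h2
  convert hsum using 2
  · rw [Matrix.mul_smul, Matrix.smul_mul, smul_add, smul_smul]
    norm_num
  · abel

/-- Let `A`, `B`, `S` be real `2n × 2n` matrices with `B`, `S`
symmetric.  If `2S + iJ` and `B + i(J - AᵀJA)` are positive semidefinite, then so is
`2(AᵀSA + ½B) + iJ`. -/
theorem gaussian_covariance_transform_posSemidef {n : ℕ}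
    (A B S : Matrix (Fin n ⊕ Fin n) (Fin n ⊕ Fin n) ℝ)
    (hB : B.IsSymm) (hS : S.IsSymm)
    (h1 : (((2 : ℝ) • S).map (Complex.ofReal ·)
        + Complex.I • ((Jmat n).map (Complex.ofReal ·))).PosSemidef)
    (h2 : (B.map (Complex.ofReal ·)
        + Complex.I • ((Jmat n - Aᵀ * Jmat n * A).map (Complex.ofReal ·))).PosSemidef) :
    (((2 : ℝ) • (Aᵀ * S * A + (1 / 2 : ℝ) • B)).map (Complex.ofReal ·)
        + Complex.I • ((Jmat n).map (Complex.ofReal ·))).PosSemidef :=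
  gaussian_covariance_transform_posSemidef_general A B S h1 h2
end
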